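/- arXiv:1307.8300 — 3 statements merged into one kernel-verified Lean document; each statement's English description precedes it below -/
import Mathlib

section
/- Let k > N/2 with N odd, let (a_1,b_1),…,(a_k,b_k) be points in ℝ², let x̃ be the median of the multiset {a_1,…,a_k} together with N−k copies of +∞ (equivalently, x̃ is the ((N+1)/2)-th smallest of a_1,…,a_k when these are padded with N−k values larger than all a_i), and let ỹ be the median of {b_1,…,b_k} together with N−k copies of −∞. Suppose x̃ < ỹ. Then (x̃,ỹ) minimizes f(x,y) = ∑_{i=1}^k (|x−a_i| + |y−b_i|) + (N−k)(y−x) over all (x,y) with x < y. -/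
/-- One-dimensional median bound, right side: if `m ≤ x` and
`-c ≤ 2p - k` where `p = #{i : a i ≤ m}`, then
`∑ |m - a i| + c*m ≤ ∑ |x - a i| + c*x`. -/
lemma onedim_right {k : ℕ} (a : Fin k → ℝ) (m x c : ℝ) (hxm : m ≤ x)
    (hp : -c ≤ 2 * ((Finset.univ.filter fun i => a i ≤ m).card : ℝ) - k) :
    (∑ i, |m - a i|) + c * m ≤ (∑ i, |x - a i|) + c * x := by
  have hsplit : ∀ i : Fin k,
      |m - a i| + (if a i ≤ m then (x - m) else -(x - m)) ≤ |x - a i| := by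
    intro i
    rcases le_or_gt (a i) m with h | h
    · rw [if_pos h, abs_of_nonneg (by linarith), abs_of_nonneg (by linarith)]
      linarith
    · rw [if_neg (not_le.mpr h), abs_of_neg (by linarith)]
      have := neg_abs_le (x - a i)
      linarith
  have hsum := Finset.sum_le_sum (fun i (_ : i ∈ Finset.univ) => hsplit i)
  rw [Finset.sum_add_distrib] at hsum
  set p := (Finset.univ.filter fun i : Fin k => a i ≤ m).card with hpdef
  have hcard : (Finset.univ.filter fun i : Fin k => ¬ a i ≤ m).card = k - p := by
    have := Finset.card_filter_add_card_filter_not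
      (s := (Finset.univ : Finset (Fin k))) (p := fun i => a i ≤ m)
    simp only [Finset.card_univ, Fintype.card_fin] at this
    omega
  have hple : p ≤ k := by
    have := Finset.card_filter_le (Finset.univ : Finset (Fin k))
      (fun i => a i ≤ m)
    simpa using this
  have hif : (∑ i : Fin k, (if a i ≤ m then (x - m) else -(x - m)))
      = (p : ℝ) * (x - m) - ((k : ℝ) - p) * (x - m) := by
    rw [Finset.sum_ite, Finset.sum_const, Finset.sum_const, hcard]
    have : ((k - p : ℕ) : ℝ) = (k : ℝ) - p := by
      push_cast [hple]; ring
    simp [this]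
    ring
  rw [hif] at hsum
  nlinarith [mul_le_mul_of_nonneg_right hp (sub_nonneg.mpr hxm)]

/-- One-dimensional median bound, left side: if `x ≤ m` and
`c ≤ k - 2r` where `r = #{i : a i < m}`, then
`∑ |m - a i| + c*m ≤ ∑ |x - a i| + c*x`. -/
lemma onedim_left {k : ℕ} (a : Fin k → ℝ) (m x c : ℝ) (hxm : x ≤ m)
    (hr : c ≤ (k : ℝ) - 2 * ((Finset.univ.filter fun i => a i < m).card : ℝ)) :
    (∑ i, |m - a i|) + c * m ≤ (∑ i, |x - a i|) + c * x := by
  have hsplit : ∀ i : Fin k,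
      |m - a i| + (if a i < m then -(m - x) else (m - x)) ≤ |x - a i| := by
    intro i
    rcases lt_or_ge (a i) m with h | h
    · rw [if_pos h, abs_of_pos (by linarith)]
      have := le_abs_self (x - a i)
      linarith
    · rw [if_neg (not_lt.mpr h), abs_of_nonpos (by linarith),
        abs_of_nonpos (by linarith)]
      linarith
  have hsum := Finset.sum_le_sum (fun i (_ : i ∈ Finset.univ) => hsplit i)
  rw [Finset.sum_add_distrib] at hsum
  set r := (Finset.univ.filter fun i : Fin k => a i < m).card with hrdef
  have hcard : (Finset.univ.filter fun i : Fin k => ¬ a i < m).card = k - r := by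
    have := Finset.card_filter_add_card_filter_not
      (s := (Finset.univ : Finset (Fin k))) (p := fun i => a i < m)
    simp only [Finset.card_univ, Fintype.card_fin] at this
    omega
  have hrle : r ≤ k := by
    have := Finset.card_filter_le (Finset.univ : Finset (Fin k))
      (fun i => a i < m)
    simpa using this
  have hif : (∑ i : Fin k, (if a i < m then -(m - x) else (m - x)))
      = ((k : ℝ) - r) * (m - x) - (r : ℝ) * (m - x) := by
    rw [Finset.sum_ite, Finset.sum_const, Finset.sum_const, hcard]
    have : ((k - r : ℕ) : ℝ) = (k : ℝ) - r := by
      push_cast [hrle]; ring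
    simp [this]
    ring
  rw [hif] at hsum
  nlinarith [mul_le_mul_of_nonneg_right hr (sub_nonneg.mpr hxm)]

/-- One-dimensional median bound (both sides). -/
lemma onedim {k : ℕ} (a : Fin k → ℝ) (m x c : ℝ)
    (hp : -c ≤ 2 * ((Finset.univ.filter fun i => a i ≤ m).card : ℝ) - k)
    (hr : c ≤ (k : ℝ) - 2 * ((Finset.univ.filter fun i => a i < m).card : ℝ)) :
    (∑ i, |m - a i|) + c * m ≤ (∑ i, |x - a i|) + c * x := by
  rcases le_total m x with h | h
  · exact onedim_right a m x c h hp
  · exact onedim_left a m x c h hr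

/-- Median of `k` points and `N - k` copies of the diagonal, `N` odd, `k > N/2`.
`mx` is the `((N+1)/2)`-th smallest of the `a i` padded with `N - k` copies of `+∞`
(characterized by counting conditions and being attained), and `my` is the
`((N+1)/2)`-th smallest of the `b i` padded with `N - k` copies of `-∞`
(i.e. the `((N+1)/2 - (N-k))`-th smallest of the `b i`). If `(mx, my)` lies above
the diagonal then it minimizes the L¹ cost
`f (x,y) = ∑ (|x - a i| + |y - b i|) + (N - k)(y - x)` over `{(x,y) : x < y}`. -/
theorem median_of_points_and_diagonals_minimizer
    (k N : ℕ) (hN : Odd N) (hk : N < 2 * k) (hkN : k ≤ N)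
    (a b : Fin k → ℝ) (mx my : ℝ)
    (hmxa : ∃ i, a i = mx)
    (hmx1 : (N + 1) / 2 ≤ (Finset.univ.filter fun i => a i ≤ mx).card)
    (hmx2 : (Finset.univ.filter fun i => a i < mx).card ≤ (N + 1) / 2 - 1)
    (hmyb : ∃ i, b i = my)
    (hmy1 : (N + 1) / 2 - (N - k) ≤ (Finset.univ.filter fun i => b i ≤ my).card)
    (hmy2 : (Finset.univ.filter fun i => b i < my).card ≤ (N + 1) / 2 - (N - k) - 1)
    (hdiag : mx < my) :
    ∀ x y : ℝ, x < y →
      (∑ i, (|mx - a i| + |my - b i|)) + ((N : ℝ) - k) * (my - mx) ≤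
        (∑ i, (|x - a i| + |y - b i|)) + ((N : ℝ) - k) * (y - x) := by
  obtain ⟨t, ht⟩ := hN
  intro x y _
  set p := (Finset.univ.filter fun i : Fin k => a i ≤ mx).card
  set r := (Finset.univ.filter fun i : Fin k => a i < mx).card
  set p' := (Finset.univ.filter fun i : Fin k => b i ≤ my).card
  set r' := (Finset.univ.filter fun i : Fin k => b i < my).card
  -- nat inequalities
  have hp : N + 1 ≤ 2 * p := by omega
  have hr : 2 * r ≤ N - 1 := by omega
  have hp' : 2 * k ≤ 2 * p' + N - 1 := by omega
  have hr' : 2 * r' + N + 1 ≤ 2 * k := by omega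
  -- real versions
  have hkN' : (k : ℝ) ≤ N := by exact_mod_cast hkN
  have hpR : (N : ℝ) + 1 ≤ 2 * (p : ℝ) := by exact_mod_cast hp
  have hrR : 2 * (r : ℝ) ≤ (N : ℝ) - 1 := by
    have h1 : (1 : ℕ) ≤ N := by omega
    have : ((2 * r : ℕ) : ℝ) ≤ ((N - 1 : ℕ) : ℝ) := by exact_mod_cast hr
    push_cast [h1] at this
    linarith
  have hp'R : 2 * (k : ℝ) ≤ 2 * (p' : ℝ) + (N : ℝ) - 1 := by
    have : ((2 * k : ℕ) : ℝ) ≤ ((2 * p' + N - 1 : ℕ) : ℝ) := by exact_mod_cast hp'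
    have h1 : (1 : ℕ) ≤ 2 * p' + N := by omega
    push_cast [h1] at this
    linarith
  have hr'R : 2 * (r' : ℝ) + (N : ℝ) + 1 ≤ 2 * (k : ℝ) := by exact_mod_cast hr'
  have hA : (∑ i, |mx - a i|) + (-(((N : ℝ) - k))) * mx ≤
      (∑ i, |x - a i|) + (-(((N : ℝ) - k))) * x := by
    apply onedim
    · linarith
    · linarith
  have hB : (∑ i, |my - b i|) + ((N : ℝ) - k) * my ≤
      (∑ i, |y - b i|) + ((N : ℝ) - k) * y := by
    apply onedim
    · linarith
    · linarith
  rw [Finset.sum_add_distrib, Finset.sum_add_distrib]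
  linarith
end

section
/- For p > 2, the four points x = (1,4), y = (1,6), z = (0,5), w = (1,5) in ℝ² satisfy ‖z−w‖_p² > (1/2)‖z−y‖_p² + (1/2)‖z−x‖_p² − (1/4)‖x−y‖_p², where ‖·‖_p is the p-norm on ℝ². Explicitly: 1 > 2^{2/p} − 1. -/
/-- For `p > 2`, the points `x = (1,4)`, `y = (1,6)`, `z = (0,5)` and the midpoint
`w = (1,5)` of `x` and `y` violate the nonnegative-curvature comparison inequality in
the `p`-norm plane: `‖z-w‖_p² > ½‖z-y‖_p² + ½‖z-x‖_p² − ¼‖x-y‖_p²`, explicitly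
`1 > 2^{2/p} − 1`. -/
theorem pnorm_plane_not_nonneg_curved_of_two_lt
    (p : ℝ) (hp : 2 < p)
    (np : ℝ × ℝ → ℝ) (hnp : ∀ v : ℝ × ℝ, np v = (|v.1| ^ p + |v.2| ^ p) ^ (1 / p))
    (x y z w : ℝ × ℝ) (hx : x = (1, 4)) (hy : y = (1, 6)) (hz : z = (0, 5))
    (hw : w = (1, 5)) :
    np (z - w) ^ 2 >
      (1 / 2) * np (z - y) ^ 2 + (1 / 2) * np (z - x) ^ 2 - (1 / 4) * np (x - y) ^ 2 ∧
    (1 : ℝ) > (2 : ℝ) ^ (2 / p) - 1 := by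
  have hp0 : (0 : ℝ) < p := by linarith
  have hp0' : p ≠ 0 := ne_of_gt hp0
  have key : (2 : ℝ) ^ (2 / p) < 2 := by
    have h1 : 2 / p < 1 := (div_lt_one hp0).mpr hp
    calc (2 : ℝ) ^ (2 / p) < 2 ^ (1 : ℝ) :=
          Real.rpow_lt_rpow_of_exponent_lt one_lt_two h1
      _ = 2 := Real.rpow_one 2
  subst hx hy hz hw
  have hzw : np ((0, 5) - (1, 5)) = 1 := by
    rw [hnp]; norm_num
    rw [Real.zero_rpow hp0']; norm_num
  have hzy : np ((0, 5) - (1, 6)) = 2 ^ (1 / p) := by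
    rw [hnp]; norm_num
  have hzx : np ((0, 5) - (1, 4)) = 2 ^ (1 / p) := by
    rw [hnp]; norm_num
  have hxy : np ((1, 4) - (1, 6)) = 2 := by
    rw [hnp]; norm_num
    rw [Real.zero_rpow hp0', zero_add,
      ← Real.rpow_mul (by norm_num : (0:ℝ) ≤ 2), mul_inv_cancel₀ hp0', Real.rpow_one]
  have hsq : ((2 : ℝ) ^ (1 / p)) ^ 2 = 2 ^ (2 / p) := by
    rw [← Real.rpow_natCast ((2:ℝ) ^ (1/p)) 2, ← Real.rpow_mul (by norm_num)]
    norm_num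
    ring_nf
  rw [hzw, hzy, hzx, hxy, hsq]
  constructor
  · norm_num; linarith
  · linarith
end

section
/- Let N be odd and let k > N/2. Let x̃ be the ((N+1)/2)-th smallest value among a_1,…,a_k padded with N−k copies of +∞, and ỹ the ((N+1)/2)-th smallest among b_1,…,b_k padded with N−k copies of −∞. If x̃ ≥ ỹ, then for every (x,y) with x < y, ∑_{i=1}^k (|x−a_i| + |y−b_i|) + (N−k)(y−x) > ∑_{i=1}^k (b_i − a_i), provided the points (a_i,b_i) all satisfy a_i < b_i and not all equal to a single point on the line x=y. -/
private lemma abs_lower_left (u c m : ℝ) :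
    u - c + (if m ≤ c then 2 * max (m - u) 0 else 0) ≤ |u - c| := by
  have h1 : u - c ≤ |u - c| := le_abs_self _
  have h2 : c - u ≤ |u - c| := by rw [abs_sub_comm]; exact le_abs_self _
  split_ifs with h
  · rcases le_total m u with h' | h'
    · have : max (m - u) 0 = 0 := max_eq_right (by linarith)
      rw [this]; linarith
    · have : max (m - u) 0 = m - u := max_eq_left (by linarith)
      rw [this]; linarith
  · linarith

private lemma abs_lower_right (u c m : ℝ) :
    c - u + (if c ≤ m then 2 * max (u - m) 0 else 0) ≤ |u - c| := by
  have h1 : u - c ≤ |u - c| := le_abs_self _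
  have h2 : c - u ≤ |u - c| := by rw [abs_sub_comm]; exact le_abs_self _
  split_ifs with h
  · rcases le_total u m with h' | h'
    · have : max (u - m) 0 = 0 := max_eq_right (by linarith)
      rw [this]; linarith
    · have : max (u - m) 0 = u - m := max_eq_left (by linarith)
      rw [this]; linarith
  · linarith

/-- Median of points and copies of the diagonal when the coordinate-wise padded median
falls on or below the diagonal: with `N` odd, `k > N/2`, `mx` the `((N+1)/2)`-th
smallest of the `a i` padded with `N - k` copies of `+∞`, and `my` the `((N+1)/2)`-th
smallest of the `b i` padded with `N - k` copies of `-∞`, if `mx ≥ my` then matching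
everything to the diagonal strictly beats any single off-diagonal candidate point. -/
theorem diagonal_is_median_when_padded_median_below_diagonal
    (k N : ℕ) (hN : Odd N) (hk : N < 2 * k) (hkN : k ≤ N) (hk0 : 0 < k)
    (a b : Fin k → ℝ) (hab : ∀ i, a i < b i)
    (mx my : ℝ)
    (hmxa : ∃ i, a i = mx)
    (hmx1 : (N + 1) / 2 ≤ (Finset.univ.filter fun i => a i ≤ mx).card)
    (hmx2 : (Finset.univ.filter fun i => a i < mx).card ≤ (N + 1) / 2 - 1)
    (hmyb : ∃ i, b i = my)
    (hmy1 : (N + 1) / 2 - (N - k) ≤ (Finset.univ.filter fun i => b i ≤ my).card)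
    (hmy2 : (Finset.univ.filter fun i => b i < my).card ≤ (N + 1) / 2 - (N - k) - 1)
    (hdiag : my ≤ mx) :
    ∀ x y : ℝ, x < y →
      (∑ i, (|x - a i| + |y - b i|)) + ((N : ℝ) - k) * (y - x) >
        ∑ i, (b i - a i) := by
  obtain ⟨t, rfl⟩ := hN
  intro x y hxy
  set P := max (mx - x) 0 with hPdef
  set Q := max (y - my) 0 with hQdef
  have hP0 : 0 ≤ P := le_max_right _ _
  have hQ0 : 0 ≤ Q := le_max_right _ _
  have hP1 : mx - x ≤ P := le_max_left _ _
  have hQ1 : y - my ≤ Q := le_max_left _ _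
  have hkt : t + 1 ≤ k := by omega
  -- cardinality of the complement filter for a
  have hsplit : ((Finset.univ : Finset (Fin k)).filter fun i => a i < mx).card
      + ((Finset.univ : Finset (Fin k)).filter fun i => ¬ a i < mx).card = k := by
    rw [Finset.card_filter_add_card_filter_not]
    simp
  have hfeq : ((Finset.univ : Finset (Fin k)).filter fun i => ¬ a i < mx)
      = (Finset.univ.filter fun i => mx ≤ a i) := by
    apply Finset.filter_congr
    intro i _
    simp [not_lt]
  have hS1 : k - t ≤ ((Finset.univ : Finset (Fin k)).filter fun i => mx ≤ a i).card := by
    rw [← hfeq]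
    omega
  have hS2 : k - t ≤ ((Finset.univ : Finset (Fin k)).filter fun i => b i ≤ my).card := by
    omega
  set c1 := ((Finset.univ : Finset (Fin k)).filter fun i => mx ≤ a i).card with hc1def
  set c2 := ((Finset.univ : Finset (Fin k)).filter fun i => b i ≤ my).card with hc2def
  have hc1 : (k : ℝ) - t ≤ c1 := by
    have h : ((k - t : ℕ) : ℝ) ≤ (c1 : ℝ) := Nat.cast_le.mpr hS1
    rwa [Nat.cast_sub (by omega)] at h
  have hc2 : (k : ℝ) - t ≤ c2 := by
    have h : ((k - t : ℕ) : ℝ) ≤ (c2 : ℝ) := Nat.cast_le.mpr hS2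
    rwa [Nat.cast_sub (by omega)] at h
  clear hmx1 hmx2 hmy1 hmy2 hsplit hfeq hS1 hS2 hmxa hmyb hab hkN hk0 hk
  -- termwise lower bound
  have key : ∀ i ∈ (Finset.univ : Finset (Fin k)),
      (x - a i) + (b i - y) + ((if mx ≤ a i then 2 * P else 0)
        + (if b i ≤ my then 2 * Q else 0)) ≤ |x - a i| + |y - b i| := by
    intro i _
    have h1 := abs_lower_left x (a i) mx
    have h2 := abs_lower_right y (b i) my
    rw [hPdef, hQdef]
    linarith
  have hsum := Finset.sum_le_sum key
  -- evaluate the lower-bound sum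
  have e1 : ∑ i : Fin k, (if mx ≤ a i then 2 * P else 0) = (c1 : ℝ) * (2 * P) := by
    rw [← Finset.sum_filter, Finset.sum_const, nsmul_eq_mul]
  have e2 : ∑ i : Fin k, (if b i ≤ my then 2 * Q else 0) = (c2 : ℝ) * (2 * Q) := by
    rw [← Finset.sum_filter, Finset.sum_const, nsmul_eq_mul]
  have e3 : ∑ i : Fin k, ((x - a i) + (b i - y) + ((if mx ≤ a i then 2 * P else 0)
        + (if b i ≤ my then 2 * Q else 0)))
      = (∑ i, (b i - a i)) + (k : ℝ) * (x - y) + ((c1 : ℝ) * (2 * P) + (c2 : ℝ) * (2 * Q)) := by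
    rw [Finset.sum_add_distrib, Finset.sum_add_distrib, Finset.sum_add_distrib, e1, e2]
    have : ∑ i : Fin k, (x - a i) + ∑ i : Fin k, (b i - y)
        = (∑ i, (b i - a i)) + (k : ℝ) * (x - y) := by
      rw [← Finset.sum_add_distrib]
      have h := Finset.sum_congr rfl (fun i (_ : i ∈ (Finset.univ : Finset (Fin k))) =>
        show (x - a i) + (b i - y) = (b i - a i) + (x - y) by ring)
      rw [h, Finset.sum_add_distrib, Finset.sum_const, Finset.card_univ,
        Fintype.card_fin, nsmul_eq_mul]
    linarith
  rw [e3] at hsum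
  -- products needed for the final linear combination
  have p1 : ((k : ℝ) - t) * (2 * P) ≤ (c1 : ℝ) * (2 * P) :=
    mul_le_mul_of_nonneg_right hc1 (by linarith)
  have p2 : ((k : ℝ) - t) * (2 * Q) ≤ (c2 : ℝ) * (2 * Q) :=
    mul_le_mul_of_nonneg_right hc2 (by linarith)
  have hPQ : y - x ≤ P + Q := by linarith
  have p3 : ((k : ℝ) - t) * (y - x) ≤ ((k : ℝ) - t) * (P + Q) := by
    apply mul_le_mul_of_nonneg_left hPQ
    have : (t : ℝ) + 1 ≤ k := by exact_mod_cast hkt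
    linarith
  have hNcast : ((2 * t + 1 : ℕ) : ℝ) = 2 * (t : ℝ) + 1 := by push_cast; ring
  rw [hNcast]
  nlinarith [hsum, p1, p2, p3, hxy]
end
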